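/- Let {B_i} be an orthogonal BSCC decomposition of E_∞(H). Then for each i and every density operator ρ, lim_{k→∞} tr(P_{B_i} E^k(ρ)) = tr(P_{B_i} E_∞(ρ)). -/

import Mathlib

open Matrix Filter Topology
open scoped ComplexOrder

/-- The matrix of the orthogonal projection onto a subspace `X`. -/
noncomputable def projMat {d : ℕ} (X : Submodule ℂ (EuclideanSpace ℂ (Fin d))) :
    Matrix (Fin d) (Fin d) ℂ :=
  Matrix.toEuclideanLin.symm ((X.subtypeL.comp X.orthogonalProjectionOnto).toLinearMap)

/-- The support of an operator: the range of the associated linear map. -/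
noncomputable def matSupp {d : ℕ} (A : Matrix (Fin d) (Fin d) ℂ) :
    Submodule ℂ (EuclideanSpace ℂ (Fin d)) :=
  LinearMap.range (Matrix.toEuclideanLin A)

/-- The outer product `|v⟩⟨v|`. -/
noncomputable def outer {d : ℕ} (v : EuclideanSpace ℂ (Fin d)) : Matrix (Fin d) (Fin d) ℂ :=
  fun i j => v i * star (v j)

/-- The completely positive map `A ↦ ∑ i, E i * A * (E i)†` given by Kraus operators `E`. -/
noncomputable def krausMap {d m : ℕ} (E : Fin m → Matrix (Fin d) (Fin d) ℂ)
    (A : Matrix (Fin d) (Fin d) ℂ) : Matrix (Fin d) (Fin d) ℂ :=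
  ∑ i, E i * A * (E i)ᴴ

/-- The reachable space of a state `ρ`: the join of the supports of all iterates. -/
noncomputable def Reach {d m : ℕ} (E : Fin m → Matrix (Fin d) (Fin d) ℂ)
    (ρ : Matrix (Fin d) (Fin d) ℂ) : Submodule ℂ (EuclideanSpace ℂ (Fin d)) :=
  ⨆ n : ℕ, matSupp ((krausMap E)^[n] ρ)

/-- A BSCC: a nonzero invariant subspace `B` such that the reachable space of every
nonzero vector of `B` is exactly `B`. -/
noncomputable def IsBSCC {d m : ℕ} (E : Fin m → Matrix (Fin d) (Fin d) ℂ)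
    (B : Submodule ℂ (EuclideanSpace ℂ (Fin d))) : Prop :=
  B ≠ ⊥ ∧
  (∀ ρ : Matrix (Fin d) (Fin d) ℂ, ρ.PosSemidef → matSupp ρ ≤ B →
      matSupp (krausMap E ρ) ≤ B) ∧
  (∀ v : EuclideanSpace ℂ (Fin d), v ∈ B → v ≠ 0 → Reach E (outer v) = B)

/-!
Let `P` project onto an invariant subspace and `Q = 1 - P`. Invariance gives `Q E_j P = 0`, and
with `∑ E_jᴴ E_j = 1` this yields the operator inequality
`∑ E_jᴴ Q E_j = Q - ∑ (P E_j Q)ᴴ (P E_j Q) ≤ Q`. Dually, `k ↦ tr(P E^k(ρ))` is non-decreasing;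
it is bounded by `tr ρ`, hence convergent. Its Cesàro means converge to the same limit, and by
the definition of `E_∞` they also converge to `tr(P E_∞(ρ))`.
-/

theorem IsStarProjection.star_mul_one_sub_mul_add {R : Type*} [Ring R] [StarRing R] {p a : R}
    (hp : IsStarProjection p) (hpa : (1 - p) * a * p = 0) :
    star a * (1 - p) * a + star (p * a * (1 - p)) * (p * a * (1 - p))
      = (1 - p) * (star a * a) * (1 - p) := by
  have hq := hp.one_sub
  generalize hq_def : 1 - p = q at hq hpa ⊢
  have hpq : p + q = 1 := by rw [← hq_def, add_sub_cancel]
  have hqa : q * a = q * a * q := by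
    calc q * a = q * a * (p + q) := by rw [hpq, mul_one]
      _ = q * a * q := by rw [mul_add, hpa, zero_add]
  have haq : star a * q = q * star a * q := by
    simpa only [star_mul, hq.isSelfAdjoint.star_eq, mul_assoc] using congrArg star hqa
  have hqaq : star a * q * a = q * star a * q * a * q := by
    calc star a * q * a = (star a * q) * (q * a) := by
          rw [← mul_assoc, mul_assoc (star a) q q, hq.isIdempotentElem.eq]
      _ = (q * star a * q) * (q * a * q) := by rw [← haq, ← hqa]
      _ = q * star a * (q * q) * a * q := by noncomm_ring
      _ = q * star a * q * a * q := by rw [hq.isIdempotentElem.eq]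
  rw [hqaq, star_mul, star_mul, hp.isSelfAdjoint.star_eq, hq.isSelfAdjoint.star_eq]
  calc q * star a * q * a * q + q * (star a * p) * (p * a * q)
      = q * star a * q * a * q + q * star a * (p * p) * a * q := by noncomm_ring
    _ = q * star a * (p + q) * a * q := by rw [hp.isIdempotentElem.eq]; noncomm_ring
    _ = q * (star a * a) * q := by rw [hpq]; noncomm_ring

section StarProjection

variable {n 𝕜 : Type*} [Fintype n] [RCLike 𝕜]

theorem IsStarProjection.trace_mul_nonneg {P σ : Matrix n n 𝕜} (hP : IsStarProjection P)
    (hσ : σ.PosSemidef) : 0 ≤ (P * σ).trace := by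
  have h := (hσ.mul_mul_conjTranspose_same P).trace_nonneg
  rwa [Matrix.trace_mul_cycle, ← Matrix.star_eq_conjTranspose, hP.isSelfAdjoint.star_eq,
    hP.isIdempotentElem.eq] at h

theorem IsStarProjection.trace_mul_le_trace [DecidableEq n] {P σ : Matrix n n 𝕜}
    (hP : IsStarProjection P) (hσ : σ.PosSemidef) : (P * σ).trace ≤ σ.trace := by
  have h := hP.one_sub.trace_mul_nonneg hσ
  rwa [Matrix.sub_mul, Matrix.one_mul, Matrix.trace_sub, sub_nonneg] at h

end StarProjection

theorem Complex.exists_tendsto_of_monotone_of_le {a : ℕ → ℂ} (ha : Monotone a) {c : ℂ}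
    (hc : ∀ k, a k ≤ c) : ∃ L, Tendsto a atTop (𝓝 L) := by
  have him : ∀ k, (a k).im = (a 0).im := fun k => (Complex.le_def.mp (ha (Nat.zero_le k))).2.symm
  have hre : Monotone fun k => (a k).re := fun i j h => (Complex.le_def.mp (ha h)).1
  have hbdd : BddAbove (Set.range fun k => (a k).re) := by
    refine ⟨c.re, ?_⟩
    rintro _ ⟨k, rfl⟩
    exact (Complex.le_def.mp (hc k)).1
  have ha_eq : a = fun k => ((a k).re : ℂ) + (a 0).im * Complex.I := by
    funext k
    apply Complex.ext <;> simp [him k]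
  rw [ha_eq]
  exact ⟨_, ((Complex.continuous_ofReal.tendsto _).comp
    (tendsto_atTop_ciSup hre hbdd)).add_const _⟩

theorem Filter.Tendsto.cesaro_Icc_smul {E : Type*} [NormedAddCommGroup E] [NormedSpace ℂ E]
    {u : ℕ → E} {l : E} (h : Tendsto u atTop (𝓝 l)) :
    Tendsto (fun N : ℕ => (N : ℂ)⁻¹ • ∑ n ∈ Finset.Icc 1 N, u n) atTop (𝓝 l) := by
  refine (h.comp (tendsto_add_atTop_nat 1)).cesaro_smul.congr fun N => ?_
  rw [← Finset.Ico_add_one_right_eq_Icc, Finset.sum_Ico_eq_sum_range, Nat.add_sub_cancel]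
  simp only [Function.comp_apply, add_comm 1]
  rw [← Complex.coe_smul]
  push_cast
  rfl

section Kraus

variable {d m : ℕ}

theorem toEuclideanCLM_projMat (X : Submodule ℂ (EuclideanSpace ℂ (Fin d))) :
    Matrix.toEuclideanCLM (n := Fin d) (𝕜 := ℂ) (projMat X) = X.starProjection :=
  ContinuousLinearMap.ext fun x => by
    change Matrix.toEuclideanLin (Matrix.toEuclideanLin.symm _) x = _
    rw [LinearEquiv.apply_symm_apply]
    rfl

theorem isStarProjection_projMat (X : Submodule ℂ (EuclideanSpace ℂ (Fin d))) :
    IsStarProjection (projMat X) := by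
  have hP := isStarProjection_starProjection (U := X)
  have hinj := EquivLike.injective (Matrix.toEuclideanCLM (n := Fin d) (𝕜 := ℂ))
  refine ⟨hinj ?_, hinj ?_⟩
  · rw [map_mul, toEuclideanCLM_projMat]
    exact hP.isIdempotentElem
  · rw [map_star, toEuclideanCLM_projMat]
    exact hP.isSelfAdjoint

theorem matSupp_projMat_le (X : Submodule ℂ (EuclideanSpace ℂ (Fin d))) :
    matSupp (projMat X) ≤ X := by
  rintro _ ⟨x, rfl⟩
  rw [← Matrix.coe_toEuclideanCLM_eq_toEuclideanLin, ContinuousLinearMap.coe_coe,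
    toEuclideanCLM_projMat]
  exact X.starProjection_apply_mem x

theorem one_sub_projMat_mul_eq_zero_of_matSupp_le {X : Submodule ℂ (EuclideanSpace ℂ (Fin d))}
    {A : Matrix (Fin d) (Fin d) ℂ} (hA : matSupp A ≤ X) : (1 - projMat X) * A = 0 := by
  apply EquivLike.injective (Matrix.toEuclideanCLM (n := Fin d) (𝕜 := ℂ))
  rw [map_mul, map_sub, map_one, map_zero, toEuclideanCLM_projMat]
  ext1 x
  have hx : Matrix.toEuclideanCLM (n := Fin d) (𝕜 := ℂ) A x ∈ X := hA ⟨x, rfl⟩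
  simp [Submodule.starProjection_eq_self_iff.mpr hx]

variable (E : Fin m → Matrix (Fin d) (Fin d) ℂ)

def IsKrausInvariant (X : Submodule ℂ (EuclideanSpace ℂ (Fin d))) : Prop :=
  ∀ ρ : Matrix (Fin d) (Fin d) ℂ, ρ.PosSemidef → matSupp ρ ≤ X → matSupp (krausMap E ρ) ≤ X

theorem krausMap_posSemidef {A : Matrix (Fin d) (Fin d) ℂ} (hA : A.PosSemidef) :
    (krausMap E A).PosSemidef :=
  Matrix.posSemidef_sum _ fun j _ => hA.mul_mul_conjTranspose_same (E j)

theorem trace_mul_krausMap (A σ : Matrix (Fin d) (Fin d) ℂ) :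
    (A * krausMap E σ).trace = (krausMap (fun j => (E j)ᴴ) A * σ).trace := by
  simp only [krausMap, Matrix.mul_sum, Matrix.sum_mul, Matrix.trace_sum,
    conjTranspose_conjTranspose]
  refine Finset.sum_congr rfl fun j _ => ?_
  rw [← Matrix.mul_assoc, Matrix.trace_mul_cycle]
  simp only [Matrix.mul_assoc]

variable {E}

theorem trace_krausMap (hE : ∑ i, (E i)ᴴ * E i = 1) (σ : Matrix (Fin d) (Fin d) ℂ) :
    (krausMap E σ).trace = σ.trace := by
  have h := trace_mul_krausMap E 1 σ
  simpa only [krausMap, Matrix.mul_one, conjTranspose_conjTranspose, hE, Matrix.one_mul] using h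

theorem IsKrausInvariant.one_sub_projMat_mul_mul_projMat_eq_zero
    {X : Submodule ℂ (EuclideanSpace ℂ (Fin d))} (hX : IsKrausInvariant E X) (j : Fin m) :
    (1 - projMat X) * E j * projMat X = 0 := by
  have hP := isStarProjection_projMat X
  have hK : (1 - projMat X) * krausMap E (projMat X) = 0 := by
    refine one_sub_projMat_mul_eq_zero_of_matSupp_le (hX _ ?_ (matSupp_projMat_le X))
    simpa only [← Matrix.star_eq_conjTranspose, hP.isSelfAdjoint.star_eq, hP.isIdempotentElem.eq]
      using Matrix.posSemidef_self_mul_conjTranspose (projMat X)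
  set P := projMat X
  set C : Fin m → Matrix (Fin d) (Fin d) ℂ := fun j => (1 - P) * E j * P
  -- `(1 - P) E(P) (1 - P) = ∑ C j (C j)ᴴ`, which vanishes because `E(P)` is supported in `X`
  have hsum : ∑ j, (C j * (C j)ᴴ).trace = 0 := by
    have hC : ∀ j, C j * (C j)ᴴ = (1 - P) * (E j * P * (E j)ᴴ) * (1 - P) := by
      intro j
      have hPP : ∀ A, P * (P * A) = P * A := fun A => by
        rw [← Matrix.mul_assoc, hP.isIdempotentElem.eq]
      simp only [C, ← Matrix.star_eq_conjTranspose, star_mul, hP.isSelfAdjoint.star_eq,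
        hP.one_sub.isSelfAdjoint.star_eq, Matrix.mul_assoc, hPP]
    rw [← Matrix.trace_sum, Finset.sum_congr rfl fun j _ => hC j, ← Finset.sum_mul,
      ← Finset.mul_sum, ← krausMap, hK, Matrix.zero_mul, Matrix.trace_zero]
  exact Matrix.trace_mul_conjTranspose_self_eq_zero_iff.mp
    ((Finset.sum_eq_zero_iff_of_nonneg fun j _ =>
      (Matrix.posSemidef_self_mul_conjTranspose (C j)).trace_nonneg).mp hsum j (Finset.mem_univ j))

theorem one_sub_sub_krausMap_conjTranspose_eq_sum {P : Matrix (Fin d) (Fin d) ℂ}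
    (hP : IsStarProjection P) (hE : ∑ i, (E i)ᴴ * E i = 1)
    (hPE : ∀ j, (1 - P) * E j * P = 0) :
    (1 - P) - krausMap (fun j => (E j)ᴴ) (1 - P)
      = ∑ j, (P * E j * (1 - P))ᴴ * (P * E j * (1 - P)) := by
  have h := Finset.sum_congr rfl fun j (_ : j ∈ Finset.univ) => hP.star_mul_one_sub_mul_add (hPE j)
  rw [Finset.sum_add_distrib, ← Finset.sum_mul, ← Finset.mul_sum] at h
  simp only [← Matrix.star_eq_conjTranspose] at h hE
  rw [hE, Matrix.mul_one, hP.one_sub.isIdempotentElem.eq] at h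
  rw [sub_eq_iff_eq_add', krausMap]
  simpa only [← Matrix.star_eq_conjTranspose, star_star] using h.symm

theorem trace_mul_le_trace_mul_krausMap {P : Matrix (Fin d) (Fin d) ℂ} (hP : IsStarProjection P)
    (hE : ∑ i, (E i)ᴴ * E i = 1) (hPE : ∀ j, (1 - P) * E j * P = 0)
    {σ : Matrix (Fin d) (Fin d) ℂ} (hσ : σ.PosSemidef) :
    (P * σ).trace ≤ (P * krausMap E σ).trace := by
  have hQ : ((1 - P) * krausMap E σ).trace ≤ ((1 - P) * σ).trace := by
    rw [trace_mul_krausMap, ← sub_nonneg, ← Matrix.trace_sub, ← Matrix.sub_mul,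
      one_sub_sub_krausMap_conjTranspose_eq_sum hP hE hPE, Matrix.sum_mul, Matrix.trace_sum]
    refine Finset.sum_nonneg fun j _ => ?_
    rw [← Matrix.trace_mul_cycle]
    exact (hσ.mul_mul_conjTranspose_same _).trace_nonneg
  have hsplit : ∀ A : Matrix (Fin d) (Fin d) ℂ, (P * A).trace = A.trace - ((1 - P) * A).trace :=
    fun A => by rw [Matrix.sub_mul, Matrix.one_mul, Matrix.trace_sub, sub_sub_cancel]
  rw [hsplit, hsplit (krausMap E σ), trace_krausMap hE]
  exact sub_le_sub_left hQ _

theorem IsKrausInvariant.exists_tendsto_trace_projMat_mul_iterate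
    {X : Submodule ℂ (EuclideanSpace ℂ (Fin d))} (hX : IsKrausInvariant E X)
    (hE : ∑ i, (E i)ᴴ * E i = 1) {ρ : Matrix (Fin d) (Fin d) ℂ} (hρ : ρ.PosSemidef) :
    ∃ L, Tendsto (fun k => (projMat X * (krausMap E)^[k] ρ).trace) atTop (𝓝 L) := by
  have hP := isStarProjection_projMat X
  have hpsd : ∀ k, ((krausMap E)^[k] ρ).PosSemidef :=
    Function.Iterate.rec _ hρ fun _ => krausMap_posSemidef E
  have htrace : ∀ k, ((krausMap E)^[k] ρ).trace = ρ.trace :=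
    Function.Iterate.rec (fun σ : Matrix (Fin d) (Fin d) ℂ => σ.trace = ρ.trace) rfl
      fun σ h => (trace_krausMap hE σ).trans h
  refine Complex.exists_tendsto_of_monotone_of_le (c := ρ.trace) ?_ fun k => ?_
  · refine monotone_nat_of_le_succ fun k => ?_
    rw [Function.iterate_succ_apply']
    exact trace_mul_le_trace_mul_krausMap hP hE
      hX.one_sub_projMat_mul_mul_projMat_eq_zero (hpsd k)
  · exact (hP.trace_mul_le_trace (hpsd k)).trans_eq (htrace k)

end Kraus

theorem stmt17_general {d m : ℕ} (E : Fin m → Matrix (Fin d) (Fin d) ℂ)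
    (hE : ∑ i, (E i)ᴴ * E i = 1)
    (Einf : Matrix (Fin d) (Fin d) ℂ → Matrix (Fin d) (Fin d) ℂ)
    (hEinf : ∀ A : Matrix (Fin d) (Fin d) ℂ, Tendsto (fun N : ℕ => (N : ℂ)⁻¹ • ∑ n ∈ Finset.Icc 1 N, (krausMap E)^[n] A) atTop (nhds (Einf A)))
    {u : ℕ} (B : Fin u → Submodule ℂ (EuclideanSpace ℂ (Fin d)))
    (hB : ∀ i, IsBSCC E (B i)) :
    ∀ (i : Fin u) (ρ : Matrix (Fin d) (Fin d) ℂ), ρ.PosSemidef → ρ.trace = 1 →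
      Tendsto (fun k : ℕ => (projMat (B i) * (krausMap E)^[k] ρ).trace) atTop
        (nhds ((projMat (B i) * Einf ρ).trace)) := by
  intro i ρ hρ _
  obtain ⟨L, hL⟩ := IsKrausInvariant.exists_tendsto_trace_projMat_mul_iterate (hB i).2.1 hE hρ
  have hEinf_trace : Tendsto (fun N : ℕ => (N : ℂ)⁻¹ •
      ∑ n ∈ Finset.Icc 1 N, (projMat (B i) * (krausMap E)^[n] ρ).trace) atTop
      (𝓝 (projMat (B i) * Einf ρ).trace) := by
    have hcont : Continuous fun A : Matrix (Fin d) (Fin d) ℂ => (projMat (B i) * A).trace :=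
      (continuous_const.matrix_mul continuous_id).matrix_trace
    simpa only [Function.comp_def, Matrix.mul_smul, Matrix.trace_smul, Matrix.mul_sum,
      Matrix.trace_sum] using (hcont.tendsto _).comp (hEinf ρ)
  rwa [tendsto_nhds_unique hL.cesaro_Icc_smul hEinf_trace] at hL

/-- For an orthogonal BSCC decomposition of `E_∞(H)`, the limit probability of each BSCC
equals the probability under the asymptotic average. -/
theorem stmt17 {d m : ℕ} (E : Fin m → Matrix (Fin d) (Fin d) ℂ)
    (hE : ∑ i, (E i)ᴴ * E i = 1)
    (Einf : Matrix (Fin d) (Fin d) ℂ → Matrix (Fin d) (Fin d) ℂ)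
    (hEinf : ∀ A : Matrix (Fin d) (Fin d) ℂ, Tendsto (fun N : ℕ => (N : ℂ)⁻¹ • ∑ n ∈ Finset.Icc 1 N, (krausMap E)^[n] A) atTop (nhds (Einf A)))
    {u : ℕ} (B : Fin u → Submodule ℂ (EuclideanSpace ℂ (Fin d)))
    (hB : ∀ i, IsBSCC E (B i))
    (hBorth : ∀ i j, i ≠ j → ∀ x ∈ B i, ∀ y ∈ B j, inner ℂ x y = (0 : ℂ))
    (hBsup : (⨆ i, B i) = matSupp (Einf ((d : ℂ)⁻¹ • (1 : Matrix (Fin d) (Fin d) ℂ)))) :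
    ∀ (i : Fin u) (ρ : Matrix (Fin d) (Fin d) ℂ), ρ.PosSemidef → ρ.trace = 1 →
      Tendsto (fun k : ℕ => (projMat (B i) * (krausMap E)^[k] ρ).trace) atTop
        (nhds ((projMat (B i) * Einf ρ).trace)) :=
  stmt17_general E hE Einf hEinf B hB
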